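/- One has the identity (θ, 0, 0, 0) = 3λ₈ − (λ₂ − λ₃) − (λ₄ − λ₅) − (λ₆ − λ₇) in ℂ⁴, and the ℤ-submodule of ℂ⁴ generated by the two vectors λ₁ = (1,0,0,0) and (θ,0,0,0) is a free ℤ-module of rank 2 which is a direct summand of the ℤ-submodule generated by {λ₁, λ₂, λ₃, λ₄, λ₅, λ₆, λ₇, λ₈}. -/
import Mathlib


open Complex

/-- The sixth root of unity `ω = e^{πi/3} = (1 + i√3)/2`. -/
noncomputable def ω : ℂ := (1 + Real.sqrt 3 * I) / 2

/-- The basis vectors `λ₁, …, λ₈` of the range of the Chern–Connes character `𝐓₃`. -/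
noncomputable def lam (θ : ℝ) : Fin 8 → Fin 4 → ℂ :=
  ![![1, 0, 0, 0],
    ![1/3, 1/3, 0, 0],
    ![1/3, -ω/3, 0, 0],
    ![1/3, 0, 1/3, 0],
    ![1/3, 0, -ω/3, 0],
    ![1/3, 0, 0, 1/3],
    ![1/3, 0, 0, -ω/3],
    ![(θ : ℂ)/3, (1 + ω)/9, (1 + ω)/9, (1 + ω)/9]]

lemma sqrt3_aux (a b : ℤ) (h : (a:ℂ) + (b:ℂ) * (Real.sqrt 3 : ℝ) * Complex.I = 0) :
    a = 0 ∧ b = 0 := by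
  rw [Complex.ext_iff] at h
  simpa using h

noncomputable def gvec (θ : ℝ) : Fin 8 → Fin 4 → ℂ :=
  ![lam θ 0, ![(θ:ℂ),0,0,0], lam θ 1, lam θ 2, lam θ 3, lam θ 4, lam θ 5, lam θ 7]

section
variable (θ : ℝ)

-- literal evaluation lemmas (each `rfl` only projects a vecCons chain; cheap)
lemma Ll0 : lam θ 0 = ![1, 0, 0, 0] := rfl
lemma Ll1 : lam θ 1 = ![1/3, 1/3, 0, 0] := rfl
lemma Ll2 : lam θ 2 = ![1/3, -ω/3, 0, 0] := rfl
lemma Ll3 : lam θ 3 = ![1/3, 0, 1/3, 0] := rfl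
lemma Ll4 : lam θ 4 = ![1/3, 0, -ω/3, 0] := rfl
lemma Ll5 : lam θ 5 = ![1/3, 0, 0, 1/3] := rfl
lemma Ll6 : lam θ 6 = ![1/3, 0, 0, -ω/3] := rfl
lemma Ll7 : lam θ 7 = ![(θ:ℂ)/3, (1+ω)/9, (1+ω)/9, (1+ω)/9] := rfl

lemma Lg0 : gvec θ 0 = ![1, 0, 0, 0] := rfl
lemma Lg1 : gvec θ 1 = ![(θ:ℂ), 0, 0, 0] := rfl
lemma Lg2 : gvec θ 2 = ![1/3, 1/3, 0, 0] := rfl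
lemma Lg3 : gvec θ 3 = ![1/3, -ω/3, 0, 0] := rfl
lemma Lg4 : gvec θ 4 = ![1/3, 0, 1/3, 0] := rfl
lemma Lg5 : gvec θ 5 = ![1/3, 0, -ω/3, 0] := rfl
lemma Lg6 : gvec θ 6 = ![1/3, 0, 0, 1/3] := rfl
lemma Lg7 : gvec θ 7 = ![(θ:ℂ)/3, (1+ω)/9, (1+ω)/9, (1+ω)/9] := rfl

-- cross identifications via rewriting (no heavy defeq)
lemma Cg0 : gvec θ 0 = lam θ 0 := by rw [Lg0, Ll0]
lemma Cg2 : gvec θ 2 = lam θ 1 := by rw [Lg2, Ll1]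
lemma Cg3 : gvec θ 3 = lam θ 2 := by rw [Lg3, Ll2]
lemma Cg4 : gvec θ 4 = lam θ 3 := by rw [Lg4, Ll3]
lemma Cg5 : gvec θ 5 = lam θ 4 := by rw [Lg5, Ll4]
lemma Cg6 : gvec θ 6 = lam θ 5 := by rw [Lg6, Ll5]
lemma Cg7 : gvec θ 7 = lam θ 7 := by rw [Lg7, Ll7]

end

lemma gvec_li (θ : ℝ) (hθ : Irrational θ) : LinearIndependent ℤ (gvec θ) := by
  rw [Fintype.linearIndependent_iff]
  intro c h
  have hω : ω = (1 + (Real.sqrt 3:ℝ) * I) / 2 := rfl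
  rw [Fin.sum_univ_eight, Lg0, Lg1, Lg2, Lg3, Lg4, Lg5, Lg6, Lg7] at h
  have h0 := congrFun h 0
  have h1 := congrFun h 1
  have h2 := congrFun h 2
  have h3 := congrFun h 3
  simp [zsmul_eq_mul] at h0 h1 h2 h3
  have k3 : ((6 * c 6 + 3 * c 7 : ℤ) : ℂ) + ((c 7 : ℤ) : ℂ) * (Real.sqrt 3 : ℝ) * I = 0 := by
    push_cast
    linear_combination 18 * h3 - 2 * (c 7 : ℂ) * hω
  obtain ⟨k31, k32⟩ := sqrt3_aux _ _ k3
  have k1 : ((6 * c 2 - 3 * c 3 + 3 * c 7 : ℤ) : ℂ)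
      + ((c 7 - 3 * c 3 : ℤ) : ℂ) * (Real.sqrt 3 : ℝ) * I = 0 := by
    push_cast
    linear_combination 18 * h1 + (6 * (c 3 : ℂ) - 2 * c 7) * hω
  obtain ⟨k11, k12⟩ := sqrt3_aux _ _ k1
  have k2 : ((6 * c 4 - 3 * c 5 + 3 * c 7 : ℤ) : ℂ)
      + ((c 7 - 3 * c 5 : ℤ) : ℂ) * (Real.sqrt 3 : ℝ) * I = 0 := by
    push_cast
    linear_combination 18 * h2 + (6 * (c 5 : ℂ) - 2 * c 7) * hω
  obtain ⟨k21, k22⟩ := sqrt3_aux _ _ k2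
  have hc7 : c 7 = 0 := k32
  have hc6 : c 6 = 0 := by omega
  have hc3 : c 3 = 0 := by omega
  have hc2 : c 2 = 0 := by omega
  have hc5 : c 5 = 0 := by omega
  have hc4 : c 4 = 0 := by omega
  rw [hc2, hc3, hc4, hc5, hc6, hc7] at h0
  simp at h0
  have h0' : (c 0 : ℝ) + (c 1 : ℝ) * θ = 0 := by exact_mod_cast h0
  have hc1 : c 1 = 0 := by
    by_contra hne
    apply hθ
    refine ⟨(-(c 0) : ℚ) / (c 1), ?_⟩
    have hne' : ((c 1 : ℝ)) ≠ 0 := Int.cast_ne_zero.2 hne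
    push_cast
    field_simp
    linarith
  have hc0 : c 0 = 0 := by
    rw [hc1] at h0'
    simp at h0'
    exact_mod_cast h0'
  intro i
  fin_cases i <;> assumption

section
variable (θ : ℝ)

lemma Lhid : (![(θ : ℂ), 0, 0, 0] : Fin 4 → ℂ)
    = (3 : ℤ) • lam θ 7 - (lam θ 1 - lam θ 2) - (lam θ 3 - lam θ 4)
      - (lam θ 5 - lam θ 6) := by
  rw [Ll1, Ll2, Ll3, Ll4, Ll5, Ll6, Ll7]
  funext j
  fin_cases j <;> simp [zsmul_eq_mul] <;> ring

lemma Lhvmem : (![(θ : ℂ), 0, 0, 0] : Fin 4 → ℂ) ∈ Submodule.span ℤ (Set.range (lam θ)) := by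
  rw [Lhid]
  have m : ∀ i : Fin 8, lam θ i ∈ Submodule.span ℤ (Set.range (lam θ)) :=
    fun i => Submodule.subset_span ⟨i, rfl⟩
  exact Submodule.sub_mem _ (Submodule.sub_mem _ (Submodule.sub_mem _
    (Submodule.smul_mem _ _ (m 7)) (Submodule.sub_mem _ (m 1) (m 2)))
    (Submodule.sub_mem _ (m 3) (m 4))) (Submodule.sub_mem _ (m 5) (m 6))

lemma Lspan_eq : Submodule.span ℤ (Set.range (gvec θ)) = Submodule.span ℤ (Set.range (lam θ)) := by
  have m : ∀ k : Fin 8, lam θ k ∈ Submodule.span ℤ (Set.range (lam θ)) :=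
    fun k => Submodule.subset_span ⟨k, rfl⟩
  have mg : ∀ k : Fin 8, gvec θ k ∈ Submodule.span ℤ (Set.range (gvec θ)) :=
    fun k => Submodule.subset_span ⟨k, rfl⟩
  apply le_antisymm
  · rw [Submodule.span_le, Set.range_subset_iff]
    intro i
    fin_cases i
    · show gvec θ 0 ∈ _; rw [Cg0]; exact m 0
    · show gvec θ 1 ∈ _; rw [Lg1]; exact Lhvmem θ
    · show gvec θ 2 ∈ _; rw [Cg2]; exact m 1
    · show gvec θ 3 ∈ _; rw [Cg3]; exact m 2
    · show gvec θ 4 ∈ _; rw [Cg4]; exact m 3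
    · show gvec θ 5 ∈ _; rw [Cg5]; exact m 4
    · show gvec θ 6 ∈ _; rw [Cg6]; exact m 5
    · show gvec θ 7 ∈ _; rw [Cg7]; exact m 7
  · rw [Submodule.span_le, Set.range_subset_iff]
    intro i
    fin_cases i
    · show lam θ 0 ∈ _; rw [← Cg0]; exact mg 0
    · show lam θ 1 ∈ _; rw [← Cg2]; exact mg 2
    · show lam θ 2 ∈ _; rw [← Cg3]; exact mg 3
    · show lam θ 3 ∈ _; rw [← Cg4]; exact mg 4
    · show lam θ 4 ∈ _; rw [← Cg5]; exact mg 5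
    · show lam θ 5 ∈ _; rw [← Cg6]; exact mg 6
    · show lam θ 6 ∈ _
      have hid6 : lam θ 6 = gvec θ 1 - (3 : ℤ) • gvec θ 7 + gvec θ 2 - gvec θ 3
          + gvec θ 4 - gvec θ 5 + gvec θ 6 := by
        have hv6 : (![(θ : ℂ), 0, 0, 0] : Fin 4 → ℂ)
            = (3 : ℤ) • gvec θ 7 - (gvec θ 2 - gvec θ 3) - (gvec θ 4 - gvec θ 5)
              - (gvec θ 6 - lam θ 6) := by
          rw [Cg7, Cg2, Cg3, Cg4, Cg5, Cg6]; exact Lhid θ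
        rw [Lg1, hv6]; abel
      rw [hid6]
      exact Submodule.add_mem _ (Submodule.sub_mem _ (Submodule.add_mem _ (Submodule.sub_mem _
        (Submodule.add_mem _ (Submodule.sub_mem _ (mg 1) (Submodule.smul_mem _ _ (mg 7)))
        (mg 2)) (mg 3)) (mg 4)) (mg 5)) (mg 6)
    · show lam θ 7 ∈ _; rw [← Cg7]; exact mg 7

end

lemma Lli2 (θ : ℝ) (hθ : Irrational θ) :
    LinearIndependent ℤ (![lam θ 0, ![(θ : ℂ), 0, 0, 0]] : Fin 2 → Fin 4 → ℂ) := by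
  rw [LinearIndependent.pair_iff]
  intro s t hst
  rw [Ll0] at hst
  have h0 := congrFun hst 0
  simp [zsmul_eq_mul] at h0
  have h0' : (s : ℝ) + (t : ℝ) * θ = 0 := by exact_mod_cast h0
  have ht : t = 0 := by
    by_contra hne
    apply hθ
    refine ⟨(-(s : ℚ)) / (t : ℚ), ?_⟩
    have hne' : ((t : ℝ)) ≠ 0 := Int.cast_ne_zero.2 hne
    push_cast
    field_simp
    linarith
  refine ⟨?_, ht⟩
  rw [ht] at h0'
  simp at h0'
  exact_mod_cast h0'

section
variable (θ : ℝ)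

lemma LhN : Submodule.span ℤ ({lam θ 0, ![(θ : ℂ), 0, 0, 0]} : Set (Fin 4 → ℂ))
    = Submodule.span ℤ (gvec θ '' ({0, 1} : Set (Fin 8))) := by
  rw [Set.image_pair, Cg0, Lg1]

lemma Lrange2 : Set.range (![lam θ 0, ![(θ : ℂ), 0, 0, 0]] : Fin 2 → Fin 4 → ℂ)
    = ({lam θ 0, ![(θ : ℂ), 0, 0, 0]} : Set (Fin 4 → ℂ)) := by
  rw [Matrix.range_cons, Matrix.range_cons_empty, Set.singleton_union]

lemma Lfree (hθ : Irrational θ) : Module.Free ℤ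
    (Submodule.span ℤ ({lam θ 0, ![(θ : ℂ), 0, 0, 0]} : Set (Fin 4 → ℂ))) := by
  rw [← Lrange2]
  exact Module.Free.of_basis (Module.Basis.span (Lli2 θ hθ))

lemma Lrank (hθ : Irrational θ) : Module.finrank ℤ
    (Submodule.span ℤ ({lam θ 0, ![(θ : ℂ), 0, 0, 0]} : Set (Fin 4 → ℂ))) = 2 := by
  rw [← Lrange2, Module.finrank_eq_card_basis (Module.Basis.span (Lli2 θ hθ))]
  simp

lemma Lle : Submodule.span ℤ ({lam θ 0, ![(θ : ℂ), 0, 0, 0]} : Set (Fin 4 → ℂ))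
    ≤ Submodule.span ℤ (Set.range (lam θ)) := by
  rw [Submodule.span_le]
  rintro x (rfl | rfl)
  · exact Submodule.subset_span ⟨0, rfl⟩
  · exact Lhvmem θ

lemma Linf (hθ : Irrational θ) :
    Submodule.span ℤ ({lam θ 0, ![(θ : ℂ), 0, 0, 0]} : Set (Fin 4 → ℂ))
    ⊓ Submodule.span ℤ (gvec θ '' ({2, 3, 4, 5, 6, 7} : Set (Fin 8))) = ⊥ := by
  rw [LhN, ← disjoint_iff]
  apply (gvec_li θ hθ).disjoint_span_image
  rw [Set.disjoint_left]
  rintro x (rfl | rfl) hx <;> simp at hx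

lemma Lsup : Submodule.span ℤ ({lam θ 0, ![(θ : ℂ), 0, 0, 0]} : Set (Fin 4 → ℂ))
    ⊔ Submodule.span ℤ (gvec θ '' ({2, 3, 4, 5, 6, 7} : Set (Fin 8)))
    = Submodule.span ℤ (Set.range (lam θ)) := by
  have hsets : (({0, 1} : Set (Fin 8)) ∪ {2, 3, 4, 5, 6, 7}) = Set.univ := by
    ext x
    simp only [Set.mem_union, Set.mem_insert_iff, Set.mem_singleton_iff,
      Set.mem_univ, iff_true]
    fin_cases x <;> simp
  rw [LhN, ← Submodule.span_union, ← Set.image_union, hsets, Set.image_univ, Lspan_eq]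

end

/-- `(θ,0,0,0) = 3λ₈ - (λ₂ - λ₃) - (λ₄ - λ₅) - (λ₆ - λ₇)` in ℂ⁴, and
the ℤ-submodule generated by `λ₁ = (1,0,0,0)` and `(θ,0,0,0)` is free of rank 2 and a
direct summand of the ℤ-submodule generated by `{λ₁, …, λ₈}`. -/
theorem theta_vector_cubic_case (θ : ℝ) (hθ : Irrational θ) :
    (![(θ : ℂ), 0, 0, 0] : Fin 4 → ℂ)
      = (3 : ℤ) • lam θ 7 - (lam θ 1 - lam θ 2) - (lam θ 3 - lam θ 4)
        - (lam θ 5 - lam θ 6) ∧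
    Module.Free ℤ
      (Submodule.span ℤ ({lam θ 0, ![(θ : ℂ), 0, 0, 0]} : Set (Fin 4 → ℂ))) ∧
    Module.finrank ℤ
      (Submodule.span ℤ ({lam θ 0, ![(θ : ℂ), 0, 0, 0]} : Set (Fin 4 → ℂ))) = 2 ∧
    Submodule.span ℤ ({lam θ 0, ![(θ : ℂ), 0, 0, 0]} : Set (Fin 4 → ℂ))
      ≤ Submodule.span ℤ (Set.range (lam θ)) ∧
    ∃ P : Submodule ℤ (Fin 4 → ℂ),
      P ≤ Submodule.span ℤ (Set.range (lam θ)) ∧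
      Submodule.span ℤ ({lam θ 0, ![(θ : ℂ), 0, 0, 0]} : Set (Fin 4 → ℂ)) ⊓ P = ⊥ ∧
      Submodule.span ℤ ({lam θ 0, ![(θ : ℂ), 0, 0, 0]} : Set (Fin 4 → ℂ)) ⊔ P
        = Submodule.span ℤ (Set.range (lam θ)) := by
  refine ⟨Lhid θ, Lfree θ hθ, Lrank θ hθ, Lle θ,
    Submodule.span ℤ (gvec θ '' ({2, 3, 4, 5, 6, 7} : Set (Fin 8))), ?_, Linf θ hθ, Lsup θ⟩
  calc Submodule.span ℤ (gvec θ '' ({2, 3, 4, 5, 6, 7} : Set (Fin 8)))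
      ≤ Submodule.span ℤ (Set.range (gvec θ)) :=
        Submodule.span_mono (Set.image_subset_range _ _)
    _ = Submodule.span ℤ (Set.range (lam θ)) := Lspan_eq θ
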